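/- Let φ be a one-variable first-order modal formula with counting quantifiers and let M = (W,≺,D,d,I) be a constant domain first-order Kripke model whose frame (W,≺) is an irreflexive intransitive tree of depth ≤ md(φ), with M,w₀ ⊨^{a₀} φ for some w₀ ∈ W and a₀ ∈ D. For w ∈ W and a ∈ D let tp(w,a) := {ξ ∈ sub(φ) : M,w ⊨^a ξ}. Then setting T_w := {tp(w,a) : a ∈ D}, μ_w(t) := min(|{a ∈ D : tp(w,a) = t}|, C+1) where C = cpt(φ), and r_a(w) := tp(w,a) for each a ∈ D, the tuple (W,≺,q,D,{r_a}_{a∈D}) with q(w) = (T_w,μ_w) is a quasimodel for φ. -/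

import Mathlib

/-! Syntax of one-variable first-order modal formulas with counting quantifiers:
    φ ::= P(x) | ¬φ | (φ∧φ) | ◇φ | ∃[≤c]x φ. -/

inductive Fml : Type
  | atom : ℕ → Fml
  | neg : Fml → Fml
  | conj : Fml → Fml → Fml
  | dia : Fml → Fml
  | countLe : ℕ → Fml → Fml
deriving DecidableEq

namespace Fml

/-- Subformulas. -/
def sub : Fml → Finset Fml
  | atom n => {atom n}
  | neg ψ => insert (neg ψ) ψ.sub
  | conj ψ χ => insert (conj ψ χ) (ψ.sub ∪ χ.sub)
  | dia ψ => insert (dia ψ) ψ.sub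
  | countLe c ψ => insert (countLe c ψ) ψ.sub

/-- Modal depth. -/
def md : Fml → ℕ
  | atom _ => 0
  | neg ψ => ψ.md
  | conj ψ χ => max ψ.md χ.md
  | dia ψ => ψ.md + 1
  | countLe _ ψ => ψ.md

/-- Capacity: the largest counting-quantifier subscript (0 if none). -/
def cpt : Fml → ℕ
  | atom _ => 0
  | neg ψ => ψ.cpt
  | conj ψ χ => max ψ.cpt χ.cpt
  | dia ψ => ψ.cpt
  | countLe c ψ => max c ψ.cpt

/-- Length of the formula as a string, counting subscripts written in binary. -/
def len : Fml → ℕ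
  | atom _ => 1
  | neg ψ => ψ.len + 1
  | conj ψ χ => ψ.len + χ.len + 1
  | dia ψ => ψ.len + 1
  | countLe c ψ => ψ.len + Nat.size c + 1

/-- Predicate symbols occurring in a formula. -/
def preds : Fml → Finset ℕ
  | atom n => {n}
  | neg ψ => ψ.preds
  | conj ψ χ => ψ.preds ∪ χ.preds
  | dia ψ => ψ.preds
  | countLe _ ψ => ψ.preds

def imp (ψ χ : Fml) : Fml := neg (conj ψ (neg χ))
def or (ψ χ : Fml) : Fml := neg (conj (neg ψ) (neg χ))
def iff (ψ χ : Fml) : Fml := conj (ψ.imp χ) (χ.imp ψ)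
def box (ψ : Fml) : Fml := neg (dia (neg ψ))
/-- `∃x ψ := ¬∃[≤0]x ψ`. -/
def ex (ψ : Fml) : Fml := neg (countLe 0 ψ)
/-- `∀x ψ := ∃[≤0]x ¬ψ`. -/
def fal (ψ : Fml) : Fml := countLe 0 (neg ψ)
/-- A tautology. -/
def top : Fml := neg (conj (atom 0) (neg (atom 0)))

/-- `boxIter n ψ` is `□^n ψ`. -/
def boxIter : ℕ → Fml → Fml
  | 0, ψ => ψ
  | n+1, ψ => (boxIter n ψ).box

/-- `boxLe m ψ` is `⋀_{k=0}^{m} □^k ψ`. -/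
def boxLe : ℕ → Fml → Fml
  | 0, ψ => ψ
  | n+1, ψ => conj (boxLe n ψ) (boxIter (n+1) ψ)

end Fml

/-- A first-order Kripke model `M = (W,R,D,d,I)` (unary predicates suffice for the
one-variable fragment). -/
structure KModel where
  W : Type
  R : W → W → Prop
  D : Type
  Dne : Nonempty D
  dom : W → Set D
  domNe : ∀ w, (dom w).Nonempty
  I : W → ℕ → Set D
  Isub : ∀ w p, I w p ⊆ dom w

/-- Satisfaction `M,w ⊨^a φ`. -/
def KModel.sat (M : KModel) : Fml → M.W → M.D → Prop
  | .atom p, w, a => a ∈ M.I w p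
  | .neg ψ, w, a => ¬ M.sat ψ w a
  | .conj ψ χ, w, a => M.sat ψ w a ∧ M.sat χ w a
  | .dia ψ, w, a => ∃ v, M.R w v ∧ M.sat ψ v a
  | .countLe c ψ, w, _ => {b | b ∈ M.dom w ∧ M.sat ψ w b}.encard ≤ (c : ℕ∞)

def KModel.constDom (M : KModel) : Prop := ∀ u v, M.dom u = M.dom v
def KModel.expDom (M : KModel) : Prop := ∀ u v, M.R u v → M.dom u ⊆ M.dom v
def KModel.decDom (M : KModel) : Prop := ∀ u v, M.R u v → M.dom v ⊆ M.dom u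

/-- Satisfiability with respect to QK (constant domains). -/
def satQK (φ : Fml) : Prop :=
  ∃ M : KModel, M.constDom ∧ ∃ w a, a ∈ M.dom w ∧ M.sat φ w a

/-- Satisfiability with respect to QK^exp (expanding domains). -/
def satQKexp (φ : Fml) : Prop :=
  ∃ M : KModel, M.expDom ∧ ∃ w a, a ∈ M.dom w ∧ M.sat φ w a

/-- Satisfiability with respect to QK^dec (decreasing domains). -/
def satQKdec (φ : Fml) : Prop :=
  ∃ M : KModel, M.decDom ∧ ∃ w a, a ∈ M.dom w ∧ M.sat φ w a

/-- `R` is the immediate-successor (parent–child) relation of a rooted irreflexive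
intransitive tree of depth ≤ m with root `r`. -/
def IsTreeOfDepth {W : Type} (R : W → W → Prop) (r : W) (m : ℕ) : Prop :=
  ∃ depth : W → ℕ,
    depth r = 0 ∧ (∀ w, depth w ≤ m) ∧
    (∀ u v, R u v → depth v = depth u + 1) ∧
    (∀ v, v ≠ r → ∃! u, R u v) ∧
    (∀ v, Relation.ReflTransGen R r v)

/-- A type for φ: a Boolean-saturated subset of sub(φ). -/
def IsType (φ : Fml) (t : Finset Fml) : Prop :=
  t ⊆ φ.sub ∧
  (∀ ψ, Fml.neg ψ ∈ φ.sub → (Fml.neg ψ ∈ t ↔ ψ ∉ t)) ∧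
  (∀ ψ χ, Fml.conj ψ χ ∈ φ.sub → (Fml.conj ψ χ ∈ t ↔ ψ ∈ t ∧ χ ∈ t))

/-- A quasistate for φ: a nonempty set of types with a multiplicity function
`μ : T → {1,…,cpt(φ)+1}` satisfying ∃[≤c]-saturation. -/
structure IsQuasistate (φ : Fml) (T : Finset (Finset Fml)) (μ : Finset Fml → ℕ) : Prop where
  nonempty : T.Nonempty
  types : ∀ t ∈ T, IsType φ t
  mu_pos : ∀ t ∈ T, 1 ≤ μ t
  mu_le : ∀ t ∈ T, μ t ≤ φ.cpt + 1
  count : ∀ t ∈ T, ∀ c ξ, Fml.countLe c ξ ∈ φ.sub →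
    (Fml.countLe c ξ ∈ t ↔ (T.filter (fun t' => ξ ∈ t')).sum μ ≤ c)

/-- `(W,≺,q,I,{r_i})` is a quasimodel for φ. -/
structure IsQuasimodel (φ : Fml) {W I : Type} (prec : W → W → Prop) (root : W)
    (T : W → Finset (Finset Fml)) (μ : W → Finset Fml → ℕ)
    (r : I → W → Finset Fml) : Prop where
  tree : IsTreeOfDepth prec root φ.md
  qs : ∀ w, IsQuasistate φ (T w) (μ w)
  ine : Nonempty I
  run : ∀ i w, r i w ∈ T w
  witness : ∃ w t, t ∈ T w ∧ φ ∈ t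
  coherence : ∀ i w v ξ, Fml.dia ξ ∈ φ.sub → prec w v → ξ ∈ r i v → Fml.dia ξ ∈ r i w
  saturation : ∀ i w ξ, Fml.dia ξ ∈ φ.sub → Fml.dia ξ ∈ r i w → ∃ v, prec w v ∧ ξ ∈ r i v
  mult : ∀ w t, t ∈ T w → (μ w t : ℕ∞) = min {i : I | r i w = t}.encard ((φ.cpt : ℕ∞) + 1)

/-- Bundled quasimodels for φ. -/
structure Quasimodel (φ : Fml) where
  W : Type
  I : Type
  prec : W → W → Prop
  root : W
  T : W → Finset (Finset Fml)
  μ : W → Finset Fml → ℕ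
  r : I → W → Finset Fml
  isQM : IsQuasimodel φ prec root T μ r

open scoped Classical in
/-- `tp(w,a) = {ξ ∈ sub(φ) : M,w ⊨^a ξ}`. -/
noncomputable def modelType (M : KModel) (φ : Fml) (w : M.W) (a : M.D) : Finset Fml :=
  φ.sub.filter (fun ξ => M.sat ξ w a)

open scoped Classical in
/-- `T_w = {tp(w,a) : a ∈ d(w₀)}`. -/
noncomputable def modelT (M : KModel) (φ : Fml) (w₀ : M.W) (w : M.W) : Finset (Finset Fml) :=
  φ.sub.powerset.filter (fun t => ∃ a ∈ M.dom w₀, modelType M φ w a = t)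

/-- `μ_w(t) = min(|{a ∈ d(w₀) : tp(w,a) = t}|, cpt(φ)+1)`. -/
noncomputable def modelMu (M : KModel) (φ : Fml) (w₀ : M.W) (w : M.W) (t : Finset Fml) : ℕ :=
  (min {a : M.D | a ∈ M.dom w₀ ∧ modelType M φ w a = t}.encard ((φ.cpt : ℕ∞) + 1)).toNat

/-!
Every clause except the counting condition of a quasistate is a direct reading of the
satisfaction relation on the types `tp(w,a)`. For `∃[≤c]x ξ`: with constant domains the
elements satisfying `ξ` at `w` are partitioned by the fibres of `tp(w,·)` over the types
containing `ξ`, and since `c ≤ cpt φ`, truncating each fibre size at `cpt φ + 1` does not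
change whether their sum is at most `c`.
-/

namespace Fml

variable {φ ψ χ ξ : Fml}

theorem mem_sub_self (ψ : Fml) : ψ ∈ ψ.sub := by
  cases ψ <;> simp [sub]

theorem mem_sub_trans (hψ : ψ ∈ χ.sub) (hχ : χ ∈ φ.sub) : ψ ∈ φ.sub := by
  induction φ <;> grind [sub]

theorem mem_sub_of_neg (h : neg ψ ∈ φ.sub) : ψ ∈ φ.sub :=
  mem_sub_trans (by simp [sub, mem_sub_self]) h

theorem mem_sub_of_conj_left (h : conj ψ χ ∈ φ.sub) : ψ ∈ φ.sub :=
  mem_sub_trans (by simp [sub, mem_sub_self]) h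

theorem mem_sub_of_conj_right (h : conj ψ χ ∈ φ.sub) : χ ∈ φ.sub :=
  mem_sub_trans (by simp [sub, mem_sub_self]) h

theorem mem_sub_of_dia (h : dia ψ ∈ φ.sub) : ψ ∈ φ.sub :=
  mem_sub_trans (by simp [sub, mem_sub_self]) h

theorem mem_sub_of_countLe {c : ℕ} (h : countLe c ψ ∈ φ.sub) : ψ ∈ φ.sub :=
  mem_sub_trans (by simp [sub, mem_sub_self]) h

theorem cpt_le_of_mem_sub (h : ψ ∈ φ.sub) : ψ.cpt ≤ φ.cpt := by
  induction φ <;> grind [sub, cpt]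

theorem le_cpt_of_countLe_mem_sub {c : ℕ} (h : countLe c ξ ∈ φ.sub) : c ≤ φ.cpt :=
  (le_max_left c ξ.cpt).trans (cpt_le_of_mem_sub h)

end Fml

theorem Finset.sum_min_le_iff {ι α : Type*} [AddCommMonoid α] [LinearOrder α]
    [IsOrderedAddMonoid α] [CanonicallyOrderedAdd α] (F : Finset ι) (E : ι → α) {c k : α}
    (hck : c < k) :
    ∑ i ∈ F, min (E i) k ≤ c ↔ ∑ i ∈ F, E i ≤ c := by
  refine ⟨fun h => ?_, (Finset.sum_le_sum fun i _ => min_le_left _ _).trans⟩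
  rwa [Finset.sum_congr rfl fun i hi => ?_]
  have : min (E i) k < k := ((Finset.single_le_sum (fun j _ => zero_le) hi).trans h).trans_lt hck
  exact (min_eq_left ((min_lt_iff.1 this).resolve_right (lt_irrefl k)).le).symm

theorem Set.encard_sep_eq_sum_fiber {α β : Type*} (s : Set α) (f : α → β) (F : Finset β)
    (hf : ∀ a ∈ s, f a ∈ F) (p : β → Prop) [DecidablePred p] :
    {a | a ∈ s ∧ p (f a)}.encard = ∑ b ∈ F.filter p, {a | a ∈ s ∧ f a = b}.encard := by
  have hunion : {a | a ∈ s ∧ p (f a)} = ⋃ b ∈ (F.filter p : Set β), {a | a ∈ s ∧ f a = b} := by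
    ext a
    simp only [Set.mem_ofPred_eq, Finset.coe_filter, Set.mem_iUnion, exists_prop]
    exact ⟨fun ⟨ha, hp⟩ => ⟨f a, ⟨hf a ha, hp⟩, ha, rfl⟩, fun ⟨_, ⟨_, hp⟩, ha, rfl⟩ => ⟨ha, hp⟩⟩
  have hdisj : (F.filter p : Set β).PairwiseDisjoint fun b => {a | a ∈ s ∧ f a = b} :=
    fun b _ b' _ hbb' => Set.disjoint_left.2 fun a ⟨_, hb⟩ ⟨_, hb'⟩ => hbb' (hb ▸ hb')
  rw [hunion, (F.filter p).finite_toSet.encard_biUnion hdisj, finsum_mem_coe_finset]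

section ModelTypes

variable {M : KModel} {φ ξ : Fml} {w₀ : M.W}

theorem mem_modelType_iff (hξ : ξ ∈ φ.sub) {w : M.W} {a : M.D} :
    ξ ∈ modelType M φ w a ↔ M.sat ξ w a := by
  classical
  simp [modelType, hξ]

theorem isType_modelType (w : M.W) (a : M.D) : IsType φ (modelType M φ w a) := by
  classical
  refine ⟨Finset.filter_subset _ _, fun ψ hψ => ?_, fun ψ χ hψχ => ?_⟩
  · rw [mem_modelType_iff hψ, mem_modelType_iff (Fml.mem_sub_of_neg hψ)]
    rfl
  · rw [mem_modelType_iff hψχ, mem_modelType_iff (Fml.mem_sub_of_conj_left hψχ),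
      mem_modelType_iff (Fml.mem_sub_of_conj_right hψχ)]
    rfl

theorem dia_mem_modelType_iff (hξ : Fml.dia ξ ∈ φ.sub) {w : M.W} {a : M.D} :
    Fml.dia ξ ∈ modelType M φ w a ↔ ∃ v, M.R w v ∧ ξ ∈ modelType M φ v a := by
  simp only [mem_modelType_iff hξ, mem_modelType_iff (Fml.mem_sub_of_dia hξ)]
  rfl

theorem modelType_mem_modelT {w : M.W} {a : M.D} (ha : a ∈ M.dom w₀) :
    modelType M φ w a ∈ modelT M φ w₀ w := by
  classical
  exact Finset.mem_filter.2 ⟨Finset.mem_powerset.2 (Finset.filter_subset _ _), a, ha, rfl⟩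

theorem exists_of_mem_modelT {w : M.W} {t : Finset Fml} (ht : t ∈ modelT M φ w₀ w) :
    ∃ a ∈ M.dom w₀, modelType M φ w a = t := by
  classical
  exact (Finset.mem_filter.1 ht).2

theorem natCast_modelMu (w : M.W) (t : Finset Fml) :
    (modelMu M φ w₀ w t : ℕ∞) =
      min {a | a ∈ M.dom w₀ ∧ modelType M φ w a = t}.encard ((φ.cpt : ℕ∞) + 1) :=
  ENat.natCast_toNat (ne_top_of_le_ne_top (by simp) (min_le_right _ _))

theorem one_le_modelMu {w : M.W} {t : Finset Fml} (ht : t ∈ modelT M φ w₀ w) :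
    1 ≤ modelMu M φ w₀ w t := by
  obtain ⟨a, ha, hat⟩ := exists_of_mem_modelT ht
  rw [← Nat.one_le_cast (α := ℕ∞), natCast_modelMu]
  exact le_min (Set.one_le_encard_iff_nonempty.2 ⟨a, ha, hat⟩) le_add_self

theorem modelMu_le (w : M.W) (t : Finset Fml) : modelMu M φ w₀ w t ≤ φ.cpt + 1 := by
  rw [← Nat.cast_le (α := ℕ∞), natCast_modelMu, Nat.cast_add_one]
  exact min_le_right _ _

theorem encard_sat_eq_sum_encard_modelType (hconst : M.constDom) (hξ : ξ ∈ φ.sub) (w : M.W) :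
    {b | b ∈ M.dom w ∧ M.sat ξ w b}.encard =
      ∑ t ∈ (modelT M φ w₀ w).filter (ξ ∈ ·),
        {a | a ∈ M.dom w₀ ∧ modelType M φ w a = t}.encard := by
  rw [← Set.encard_sep_eq_sum_fiber _ _ _ fun a ha => modelType_mem_modelT ha, hconst w w₀]
  simp only [mem_modelType_iff hξ]

theorem sat_countLe_iff_sum_modelMu_le (hconst : M.constDom) {c : ℕ}
    (hcξ : Fml.countLe c ξ ∈ φ.sub) (w : M.W) (a : M.D) :
    M.sat (Fml.countLe c ξ) w a ↔
      ((modelT M φ w₀ w).filter (ξ ∈ ·)).sum (modelMu M φ w₀ w) ≤ c := by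
  have hc : (c : ℕ∞) < φ.cpt + 1 := by
    exact_mod_cast Nat.lt_succ_of_le (Fml.le_cpt_of_countLe_mem_sub hcξ)
  rw [← Nat.cast_le (α := ℕ∞), Nat.cast_sum]
  simp only [natCast_modelMu]
  rw [Finset.sum_min_le_iff _ _ hc,
    ← encard_sat_eq_sum_encard_modelType hconst (Fml.mem_sub_of_countLe hcξ)]
  rfl

theorem isQuasistate_modelT (hconst : M.constDom) (w : M.W) :
    IsQuasistate φ (modelT M φ w₀ w) (modelMu M φ w₀ w) where
  nonempty :=
    let ⟨_, ha⟩ := M.domNe w₀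
    ⟨_, modelType_mem_modelT ha⟩
  types t ht := by
    obtain ⟨a, -, rfl⟩ := exists_of_mem_modelT ht
    exact isType_modelType w a
  mu_pos _ := one_le_modelMu
  mu_le t _ := modelMu_le w t
  count t ht c ξ hcξ := by
    obtain ⟨a, -, rfl⟩ := exists_of_mem_modelT ht
    rw [mem_modelType_iff hcξ]
    exact sat_countLe_iff_sum_modelMu_le hconst hcξ w a

theorem encard_setOf_modelType_eq (w : M.W) (t : Finset Fml) :
    {i : {a // a ∈ M.dom w₀} | modelType M φ w i.1 = t}.encard =
      {a | a ∈ M.dom w₀ ∧ modelType M φ w a = t}.encard := by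
  rw [← Subtype.coe_injective.encard_image]
  congr
  ext a
  simp [and_comm]

end ModelTypes

/-- the structure extracted from a constant domain tree-model of φ is a
quasimodel for φ, with runs `r_a(w) = tp(w,a)` indexed by the (constant) domain. -/
theorem stmt_2 (φ : Fml) (M : KModel) (hconst : M.constDom)
    (root : M.W) (htree : IsTreeOfDepth M.R root φ.md)
    (w₀ : M.W) (a₀ : M.D) (ha₀ : a₀ ∈ M.dom w₀) (hsat : M.sat φ w₀ a₀) :
    IsQuasimodel φ M.R root (modelT M φ w₀) (modelMu M φ w₀)
      (fun (a : {a : M.D // a ∈ M.dom w₀}) (w : M.W) => modelType M φ w a.1) :=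
  { tree := htree
    qs := isQuasistate_modelT hconst
    ine := ⟨⟨a₀, ha₀⟩⟩
    run := fun a _ => modelType_mem_modelT a.2
    witness := ⟨w₀, _, modelType_mem_modelT ha₀, (mem_modelType_iff (Fml.mem_sub_self φ)).2 hsat⟩
    coherence := fun _ _ v _ hξ hwv hv => (dia_mem_modelType_iff hξ).2 ⟨v, hwv, hv⟩
    saturation := fun _ _ _ hξ h => (dia_mem_modelType_iff hξ).1 h
    mult := fun w t _ => by rw [encard_setOf_modelType_eq, natCast_modelMu] }
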